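/- arXiv:math/0409592 — 3 statements merged into one kernel-verified Lean document; each statement's English description precedes it below -/
import Mathlib

section
/- Let A = diag((t₀−t₁)(t₀−t₂), (t₁−t₀)(t₁−t₂), (t₂−t₀)(t₂−t₁)) and let B be the matrix of the previous statement. Then A·B² = 9φ⁶·J, where J is the 3×3 all-ones matrix, and consequently (AB²)^a = 3^(3a−3)·φ^(6a−6)·AB² for every positive integer a. -/
set_option maxHeartbeats 1000000 in
lemma aux_AM (K : Type*) [Field K] (t0 t1 t2 : K)
    (h01' : t0 - t1 ≠ 0) (h02' : t0 - t2 ≠ 0) (h12' : t1 - t2 ≠ 0)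
    (h10' : t1 - t0 ≠ 0) (h20' : t2 - t0 ≠ 0) (h21' : t2 - t1 ≠ 0) :
    (Matrix.diagonal ![(t0 - t1) * (t0 - t2), (t1 - t0) * (t1 - t2), (t2 - t0) * (t2 - t1)]) *
      !![2 * (2 * t0 - t1 - t2) / ((t0 - t1) * (t0 - t2)),
         (t0 + t1 - 2 * t2) / ((t0 - t1) * (t0 - t2)),
         (t0 + t2 - 2 * t1) / ((t0 - t1) * (t0 - t2));
         (t0 + t1 - 2 * t2) / ((t1 - t0) * (t1 - t2)),
         2 * (2 * t1 - t0 - t2) / ((t1 - t0) * (t1 - t2)),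
         (t1 + t2 - 2 * t0) / ((t1 - t0) * (t1 - t2));
         (t0 + t2 - 2 * t1) / ((t2 - t0) * (t2 - t1)),
         (t1 + t2 - 2 * t0) / ((t2 - t0) * (t2 - t1)),
         2 * (2 * t2 - t0 - t1) / ((t2 - t0) * (t2 - t1))]
    = !![2 * (2 * t0 - t1 - t2), (t0 + t1 - 2 * t2), (t0 + t2 - 2 * t1);
         (t0 + t1 - 2 * t2), 2 * (2 * t1 - t0 - t2), (t1 + t2 - 2 * t0);
         (t0 + t2 - 2 * t1), (t1 + t2 - 2 * t0), 2 * (2 * t2 - t0 - t1)] := by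
  ext i j
  fin_cases i <;> fin_cases j <;>
    · simp [Matrix.mul_apply, Fin.sum_univ_three, Matrix.vecHead, Matrix.vecTail,
        Matrix.diagonal]
      field_simp

set_option maxHeartbeats 1000000 in
lemma aux_NM (K : Type*) [Field K] (t0 t1 t2 : K)
    (h01' : t0 - t1 ≠ 0) (h02' : t0 - t2 ≠ 0) (h12' : t1 - t2 ≠ 0)
    (h10' : t1 - t0 ≠ 0) (h20' : t2 - t0 ≠ 0) (h21' : t2 - t1 ≠ 0) :
    (!![2 * (2 * t0 - t1 - t2), (t0 + t1 - 2 * t2), (t0 + t2 - 2 * t1);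
        (t0 + t1 - 2 * t2), 2 * (2 * t1 - t0 - t2), (t1 + t2 - 2 * t0);
        (t0 + t2 - 2 * t1), (t1 + t2 - 2 * t0), 2 * (2 * t2 - t0 - t1)] :
        Matrix (Fin 3) (Fin 3) K) *
      !![2 * (2 * t0 - t1 - t2) / ((t0 - t1) * (t0 - t2)),
         (t0 + t1 - 2 * t2) / ((t0 - t1) * (t0 - t2)),
         (t0 + t2 - 2 * t1) / ((t0 - t1) * (t0 - t2));
         (t0 + t1 - 2 * t2) / ((t1 - t0) * (t1 - t2)),
         2 * (2 * t1 - t0 - t2) / ((t1 - t0) * (t1 - t2)),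
         (t1 + t2 - 2 * t0) / ((t1 - t0) * (t1 - t2));
         (t0 + t2 - 2 * t1) / ((t2 - t0) * (t2 - t1)),
         (t1 + t2 - 2 * t0) / ((t2 - t0) * (t2 - t1)),
         2 * (2 * t2 - t0 - t1) / ((t2 - t0) * (t2 - t1))]
    = (9:K) • !![(1:K), 1, 1; 1, 1, 1; 1, 1, 1] := by
  ext i j
  fin_cases i <;> fin_cases j <;>
    · simp [Matrix.mul_apply, Fin.sum_univ_three, Matrix.vecHead, Matrix.vecTail]
      field_simp
      ring

lemma ones_mul_ones (K : Type*) [Field K] :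
    (!![(1:K),1,1;1,1,1;1,1,1]) * (!![(1:K),1,1;1,1,1;1,1,1])
      = (3:K) • !![(1:K),1,1;1,1,1;1,1,1] := by
  norm_num [Matrix.mul_fin_three, Matrix.smul_of, Matrix.smul_cons, Matrix.smul_empty]

lemma ones_pow (K : Type*) [Field K] (c : K) :
    ∀ a : ℕ, 0 < a → (c • !![(1:K),1,1;1,1,1;1,1,1]) ^ a
      = (c ^ a * (3:K) ^ (a - 1)) • !![(1:K),1,1;1,1,1;1,1,1] := by
  intro a ha
  induction a with
  | zero => omega
  | succ n ih =>
    rcases Nat.eq_zero_or_pos n with hn | hn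
    · subst hn; simp
    · rw [pow_succ, ih hn, Matrix.smul_mul, Matrix.mul_smul, smul_smul,
        ones_mul_ones, smul_smul]
      congr 1
      have h3 : (3:K) ^ (n - 1) * 3 = 3 ^ n := by
        rw [← pow_succ]; congr 1; omega
      have hn1 : n + 1 - 1 = n := rfl
      rw [hn1]
      linear_combination (c ^ n * c) * h3

theorem stmt_5 (K : Type*) [Field K] (t0 t1 t2 φ : K)
    (h01 : t0 ≠ t1) (h02 : t0 ≠ t2) (h12 : t1 ≠ t2) (hφ : φ ≠ 0) :
    let A : Matrix (Fin 3) (Fin 3) K :=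
      Matrix.diagonal ![(t0 - t1) * (t0 - t2), (t1 - t0) * (t1 - t2), (t2 - t0) * (t2 - t1)]
    let B : Matrix (Fin 3) (Fin 3) K := φ ^ 3 •
      !![2 * (2 * t0 - t1 - t2) / ((t0 - t1) * (t0 - t2)),
         (t0 + t1 - 2 * t2) / ((t0 - t1) * (t0 - t2)),
         (t0 + t2 - 2 * t1) / ((t0 - t1) * (t0 - t2));
         (t0 + t1 - 2 * t2) / ((t1 - t0) * (t1 - t2)),
         2 * (2 * t1 - t0 - t2) / ((t1 - t0) * (t1 - t2)),
         (t1 + t2 - 2 * t0) / ((t1 - t0) * (t1 - t2));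
         (t0 + t2 - 2 * t1) / ((t2 - t0) * (t2 - t1)),
         (t1 + t2 - 2 * t0) / ((t2 - t0) * (t2 - t1)),
         2 * (2 * t2 - t0 - t1) / ((t2 - t0) * (t2 - t1))]
    A * B ^ 2 = (9 * φ ^ 6) • !![(1:K), 1, 1; 1, 1, 1; 1, 1, 1] ∧
    ∀ a : ℕ, 0 < a →
      (A * B ^ 2) ^ a = ((3 : K) ^ (3 * a - 3) * φ ^ (6 * a - 6)) • (A * B ^ 2) := by
  intro A B
  have h01' : t0 - t1 ≠ 0 := sub_ne_zero.mpr h01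
  have h02' : t0 - t2 ≠ 0 := sub_ne_zero.mpr h02
  have h12' : t1 - t2 ≠ 0 := sub_ne_zero.mpr h12
  have h10' : t1 - t0 ≠ 0 := sub_ne_zero.mpr h01.symm
  have h20' : t2 - t0 ≠ 0 := sub_ne_zero.mpr h02.symm
  have h21' : t2 - t1 ≠ 0 := sub_ne_zero.mpr h12.symm
  have key : A * B ^ 2 = (9 * φ ^ 6) • !![(1:K), 1, 1; 1, 1, 1; 1, 1, 1] := by
    rw [pow_two, ← mul_assoc]
    show A * (φ ^ 3 • _) * (φ ^ 3 • _) = _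
    rw [Matrix.mul_smul, Matrix.mul_smul,
      aux_AM K t0 t1 t2 h01' h02' h12' h10' h20' h21', Matrix.smul_mul,
      aux_NM K t0 t1 t2 h01' h02' h12' h10' h20' h21', smul_smul, smul_smul]
    congr 1
    ring
  refine ⟨key, fun a ha => ?_⟩
  rw [key, ones_pow _ _ a ha, smul_smul]
  congr 1
  obtain ⟨b, rfl⟩ := Nat.exists_eq_add_of_lt ha
  simp only [Nat.zero_add]
  have e1 : 3 * (b + 1) - 3 = 3 * b := by omega
  have e2 : 6 * (b + 1) - 6 = 6 * b := by omega
  have e3 : b + 1 - 1 = b := rfl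
  rw [e1, e2, e3]
  have hb : (9:K) ^ b = 3 ^ (2 * b) := by
    rw [show ((9:K)) = 3 ^ 2 from by norm_num, ← pow_mul]
  have k0 : (3:K) ^ (3 * b) = 3 ^ (2 * b) * 3 ^ b := by
    rw [show 3 * b = 2 * b + b from by omega, pow_add]
  have kφ : φ ^ (6 * (b + 1)) = φ ^ (6 * b) * φ ^ 6 := by
    rw [show 6 * (b + 1) = 6 * b + 6 from by omega, pow_add]
  rw [mul_pow, ← pow_mul, kφ, k0, pow_succ, hb]
  ring
end

section
/- Let C₁, C₂ be as above and let E₁, E₂ be the matrices E₁ = φ·[[1/(t₀−t₁), (t₁−t₂)/((t₀−t₁)(t₀−t₂)), 0],[1/(t₁−t₀), (2t₁−t₀−t₂)/((t₁−t₀)(t₁−t₂)), 1/(t₁−t₂)],[0, (t₁−t₀)/((t₂−t₀)(t₂−t₁)), 1/(t₂−t₁)]] and E₂ = φ·[[1/(t₀−t₂), 0, (t₂−t₁)/((t₀−t₁)(t₀−t₂))],[0, 1/(t₁−t₂), (t₂−t₀)/((t₁−t₀)(t₁−t₂))],[1/(t₂−t₀), 1/(t₂−t₁), (2t₂−t₀−t₁)/((t₂−t₀)(t₂−t₁))]].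 Then C₁E₂ + E₁C₂ = φ⁻¹·diag(0, t₁−t₀, t₂−t₀). -/
set_option maxHeartbeats 2000000 in


theorem stmt_11 (K : Type*) [Field K] (t0 t1 t2 φ : K)
    (h01 : t0 ≠ t1) (h02 : t0 ≠ t2) (h12 : t1 ≠ t2) (hφ : φ ≠ 0) :
    let C1 : Matrix (Fin 3) (Fin 3) K :=
      φ⁻¹ ^ 2 • Matrix.diagonal ![0, (t1 - t0) * (t1 - t2), 0]
    let C2 : Matrix (Fin 3) (Fin 3) K :=
      φ⁻¹ ^ 2 • Matrix.diagonal ![0, 0, (t2 - t0) * (t2 - t1)]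
    let E1 : Matrix (Fin 3) (Fin 3) K := φ •
      !![1 / (t0 - t1), (t1 - t2) / ((t0 - t1) * (t0 - t2)), 0;
         1 / (t1 - t0), (2 * t1 - t0 - t2) / ((t1 - t0) * (t1 - t2)), 1 / (t1 - t2);
         0, (t1 - t0) / ((t2 - t0) * (t2 - t1)), 1 / (t2 - t1)]
    let E2 : Matrix (Fin 3) (Fin 3) K := φ •
      !![1 / (t0 - t2), 0, (t2 - t1) / ((t0 - t1) * (t0 - t2));
         0, 1 / (t1 - t2), (t2 - t0) / ((t1 - t0) * (t1 - t2));
         1 / (t2 - t0), 1 / (t2 - t1), (2 * t2 - t0 - t1) / ((t2 - t0) * (t2 - t1))]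
    C1 * E2 + E1 * C2 = φ⁻¹ • Matrix.diagonal ![0, t1 - t0, t2 - t0] := by
  intro C1 C2 E1 E2
  have h01' : t0 - t1 ≠ 0 := sub_ne_zero.mpr h01
  have h02' : t0 - t2 ≠ 0 := sub_ne_zero.mpr h02
  have h12' : t1 - t2 ≠ 0 := sub_ne_zero.mpr h12
  have h10' : t1 - t0 ≠ 0 := sub_ne_zero.mpr h01.symm
  have h20' : t2 - t0 ≠ 0 := sub_ne_zero.mpr h02.symm
  have h21' : t2 - t1 ≠ 0 := sub_ne_zero.mpr h12.symm
  simp only [C1, C2, E1, E2]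
  ext i j
  fin_cases i <;> fin_cases j <;>
    simp [Matrix.mul_apply, Fin.sum_univ_three, Matrix.smul_apply, Matrix.diagonal,
      Matrix.vecHead, Matrix.vecTail] <;>
    field_simp <;> ring
end

section
/- Let U₂ = C₂ + E₂ and U₂⁻¹-candidate V = N₂ + M₂, where C₂ = φ⁻²·diag(0,0,(t₂−t₀)(t₂−t₁)), E₂ is the class-β₀ level (0,1) matrix above, N₂ = φ⁻¹·diag(t₀−t₂, t₁−t₂, 0), and M₂ = φ²·J' with J'_{ab} = 1/((tₐ−t_b')(tₐ−t_c')) where {a,b',c'} = {0,1,2} (i.e. the rank-one matrix whose a-th row has every entry 1/T(xₐ)). Then U₂·V = I, the 3×3 identity matrix. -/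
set_option maxHeartbeats 1000000

theorem stmt_12 (K : Type*) [Field K] (t0 t1 t2 φ : K)
    (h01 : t0 ≠ t1) (h02 : t0 ≠ t2) (h12 : t1 ≠ t2) (hφ : φ ≠ 0) :
    let C2 : Matrix (Fin 3) (Fin 3) K :=
      φ⁻¹ ^ 2 • Matrix.diagonal ![0, 0, (t2 - t0) * (t2 - t1)]
    let E2 : Matrix (Fin 3) (Fin 3) K := φ •
      !![1 / (t0 - t2), 0, (t2 - t1) / ((t0 - t1) * (t0 - t2));
         0, 1 / (t1 - t2), (t2 - t0) / ((t1 - t0) * (t1 - t2));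
         1 / (t2 - t0), 1 / (t2 - t1), (2 * t2 - t0 - t1) / ((t2 - t0) * (t2 - t1))]
    let N2 : Matrix (Fin 3) (Fin 3) K := φ⁻¹ • Matrix.diagonal ![t0 - t2, t1 - t2, 0]
    let M2 : Matrix (Fin 3) (Fin 3) K := φ ^ 2 •
      !![1 / ((t0 - t1) * (t0 - t2)), 1 / ((t0 - t1) * (t0 - t2)), 1 / ((t0 - t1) * (t0 - t2));
         1 / ((t1 - t0) * (t1 - t2)), 1 / ((t1 - t0) * (t1 - t2)), 1 / ((t1 - t0) * (t1 - t2));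
         1 / ((t2 - t0) * (t2 - t1)), 1 / ((t2 - t0) * (t2 - t1)), 1 / ((t2 - t0) * (t2 - t1))]
    (C2 + E2) * (N2 + M2) = 1 := by
  intro C2 E2 N2 M2
  have h01' : t0 - t1 ≠ 0 := sub_ne_zero.mpr h01
  have h02' : t0 - t2 ≠ 0 := sub_ne_zero.mpr h02
  have h12' : t1 - t2 ≠ 0 := sub_ne_zero.mpr h12
  have r10 : (t1 - t0)⁻¹ = -(t0 - t1)⁻¹ := by rw [← neg_sub t0 t1, inv_neg]
  have r20 : (t2 - t0)⁻¹ = -(t0 - t2)⁻¹ := by rw [← neg_sub t0 t2, inv_neg]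
  have r21 : (t2 - t1)⁻¹ = -(t1 - t2)⁻¹ := by rw [← neg_sub t1 t2, inv_neg]
  have hx : (t0 - t1) * (t0 - t1)⁻¹ = 1 := mul_inv_cancel₀ h01'
  have hy : (t0 - t2) * (t0 - t2)⁻¹ = 1 := mul_inv_cancel₀ h02'
  have hz : (t1 - t2) * (t1 - t2)⁻¹ = 1 := mul_inv_cancel₀ h12'
  have hp : φ * φ⁻¹ = 1 := mul_inv_cancel₀ hφ
  show (C2 + E2) * (N2 + M2) = 1
  simp only [C2, E2, N2, M2]
  ext i j
  fin_cases i <;> fin_cases j <;>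
    simp [Matrix.mul_apply, Fin.sum_univ_three, Matrix.add_apply, Matrix.smul_apply,
      Matrix.diagonal_apply, Matrix.one_apply, smul_eq_mul] <;>
    simp only [div_eq_mul_inv, mul_inv, r10, r20, r21, inv_neg, neg_neg, one_div]
  · -- (0,0)
    linear_combination ((t0 - t2) * (t0 - t2)⁻¹) * hp + hy -
      (φ ^ 3 * (t0 - t1)⁻¹ * (t0 - t2)⁻¹ ^ 2) * hz
  · -- (0,1)
    linear_combination (-(φ ^ 3 * (t0 - t1)⁻¹ * (t0 - t2)⁻¹ ^ 2)) * hz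
  · -- (0,2)
    linear_combination (-(φ ^ 3 * (t0 - t1)⁻¹ * (t0 - t2)⁻¹ ^ 2)) * hz
  · -- (1,0)
    linear_combination (φ ^ 3 * (t0 - t1)⁻¹ * (t1 - t2)⁻¹ ^ 2) * hy
  · -- (1,1)
    linear_combination ((t1 - t2) * (t1 - t2)⁻¹) * hp + hz +
      (φ ^ 3 * (t0 - t1)⁻¹ * (t1 - t2)⁻¹ ^ 2) * hy
  · -- (1,2)
    linear_combination (φ ^ 3 * (t0 - t1)⁻¹ * (t1 - t2)⁻¹ ^ 2) * hy
  · -- (2,0)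
    linear_combination
      ((φ * φ⁻¹ + 1) * ((t0 - t2) * (t0 - t2)⁻¹) * ((t1 - t2) * (t1 - t2)⁻¹)
        - (t0 - t2) * (t0 - t2)⁻¹) * hp +
      ((t1 - t2) * (t1 - t2)⁻¹ - 1 - φ ^ 3 * ((t0 - t2)⁻¹ * (t1 - t2)⁻¹ ^ 2 +
        (t0 - t1)⁻¹ * (t1 - t2)⁻¹ * ((t0 - t2)⁻¹ + (t1 - t2)⁻¹))) * hy +
      (1 - φ ^ 3 * (t0 - t2)⁻¹ ^ 2 * (t1 - t2)⁻¹ + φ ^ 3 * (t0 - t1)⁻¹ * (t0 - t2)⁻¹ *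
        ((t0 - t2)⁻¹ + (t1 - t2)⁻¹)) * hz +
      (φ ^ 3 * (t0 - t2)⁻¹ * (t1 - t2)⁻¹ * ((t0 - t2)⁻¹ + (t1 - t2)⁻¹)) * hx
  · -- (2,1)
    linear_combination
      ((φ * φ⁻¹ + 1) * ((t0 - t2) * (t0 - t2)⁻¹) * ((t1 - t2) * (t1 - t2)⁻¹)
        - (t1 - t2) * (t1 - t2)⁻¹) * hp +
      ((t1 - t2) * (t1 - t2)⁻¹ - φ ^ 3 * ((t0 - t2)⁻¹ * (t1 - t2)⁻¹ ^ 2 +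
        (t0 - t1)⁻¹ * (t1 - t2)⁻¹ * ((t0 - t2)⁻¹ + (t1 - t2)⁻¹))) * hy +
      (φ ^ 3 * (t0 - t1)⁻¹ * (t0 - t2)⁻¹ * ((t0 - t2)⁻¹ + (t1 - t2)⁻¹)
        - φ ^ 3 * (t0 - t2)⁻¹ ^ 2 * (t1 - t2)⁻¹) * hz +
      (φ ^ 3 * (t0 - t2)⁻¹ * (t1 - t2)⁻¹ * ((t0 - t2)⁻¹ + (t1 - t2)⁻¹)) * hx
  · -- (2,2)
    linear_combination
      ((φ * φ⁻¹ + 1) * ((t0 - t2) * (t0 - t2)⁻¹) * ((t1 - t2) * (t1 - t2)⁻¹)) * hp +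
      ((t1 - t2) * (t1 - t2)⁻¹ - φ ^ 3 * ((t0 - t2)⁻¹ * (t1 - t2)⁻¹ ^ 2 +
        (t0 - t1)⁻¹ * (t1 - t2)⁻¹ * ((t0 - t2)⁻¹ + (t1 - t2)⁻¹))) * hy +
      (1 + φ ^ 3 * (t0 - t1)⁻¹ * (t0 - t2)⁻¹ * ((t0 - t2)⁻¹ + (t1 - t2)⁻¹)
        - φ ^ 3 * (t0 - t2)⁻¹ ^ 2 * (t1 - t2)⁻¹) * hz +
      (φ ^ 3 * (t0 - t2)⁻¹ * (t1 - t2)⁻¹ * ((t0 - t2)⁻¹ + (t1 - t2)⁻¹)) * hx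
end
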